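/- Let 1 ≤ m ≤ n and let S⁰ be an m-positive symmetric n×n matrix. Then the Gårding cone K_m(n) coincides with the connected component of the set {S ∈ Sym(n) : T_m(S) > 0} that contains S⁰. -/

import Mathlib

/-!
`T_p(S)` is the coefficient of `X ^ (n - p)` in `det (X + S) = charpoly (-S)`, which splits over `ℝ`
when `S` is symmetric. If `T_1(S), …, T_m(S) ≥ 0` and `T_m(S) > 0`, the `(n - m)`-th derivative of
this polynomial still splits (Rolle), has nonnegative coefficients and a positive constant term, so
all its roots are negative and all its coefficients, which are positive multiples of
`T_0(S), …, T_m(S)`, are positive. Hence, inside `{S symmetric | T_m(S) > 0}`, the cone `K_m(n)` is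
separated from the open set where some `T_p < 0`, so it contains every component it meets. It is
connected because it is star-shaped about `1`: for `t ≥ 0`, `T_p(S + t • 1)` is a combination of
`T_0(S), …, T_p(S)` with nonnegative coefficients, and `T_p` is homogeneous.
-/

open Matrix

/-- The `p`-trace of a square real matrix: the sum of all `p × p` principal minors.
    `ptrace 0 S = 1`. -/
noncomputable def ptrace {ι : Type*} [Fintype ι] (p : ℕ) (S : Matrix ι ι ℝ) : ℝ := by
  classical
  exact ∑ t ∈ Finset.univ.powersetCard p,
    (S.submatrix (Subtype.val : {x // x ∈ t} → ι) Subtype.val).det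

/-- The Gårding cone `K_m(n)`: real symmetric `n × n` matrices with `T_p > 0`
    for `p = 1, …, m`. -/
noncomputable def gardingCone (n m : ℕ) : Set (Matrix (Fin n) (Fin n) ℝ) :=
  {S | S.IsSymm ∧ ∀ p, 1 ≤ p → p ≤ m → 0 < ptrace p S}

open Polynomial

theorem Multiset.esymm_pos {R : Type*} [CommSemiring R] [PartialOrder R] [IsStrictOrderedRing R]
    {s : Multiset R} (hs : ∀ x ∈ s, 0 < x) {k : ℕ} (hk : k ≤ card s) : 0 < s.esymm k := by
  have hne : s.powersetCard k ≠ 0 := by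
    rw [Ne, ← card_eq_zero, card_powersetCard]
    exact (Nat.choose_pos hk).ne'
  simpa [esymm] using sum_lt_sum_of_nonempty hne (f := fun _ => 0) (g := prod)
    fun t ht => prod_pos fun x hx => hs x (mem_of_le (mem_powersetCard.1 ht).1 hx)

namespace Polynomial

variable {R : Type*} [CommSemiring R] [PartialOrder R] [IsStrictOrderedRing R]

theorem eval_pos_of_coeff_nonneg {p : R[X]} (hp : ∀ j, 0 ≤ p.coeff j) (h0 : 0 < p.coeff 0)
    {x : R} (hx : 0 ≤ x) : 0 < p.eval x := by
  rw [eval_eq_sum_range]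
  exact Finset.sum_pos' (fun j _ => mul_nonneg (hp j) (pow_nonneg hx j))
    ⟨0, by simp, by simpa using h0⟩

theorem coeff_taylor_pos {p : R[X]} {k : ℕ} (hp : ∀ j, k ≤ j → 0 ≤ p.coeff j)
    (hk : 0 < p.coeff k) {r : R} (hr : 0 ≤ r) : 0 < (taylor r p).coeff k := by
  rw [taylor_coeff]
  refine eval_pos_of_coeff_nonneg (fun j => ?_) ?_ hr <;> rw [hasseDeriv_coeff]
  · exact mul_nonneg (Nat.cast_nonneg _) (hp _ (Nat.le_add_left k j))
  · simpa using hk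

theorem Splits.derivative {p : ℝ[X]} (hp : p.Splits) : p.derivative.Splits := by
  rw [splits_iff_card_roots] at hp ⊢
  have := card_roots_le_derivative p
  have := natDegree_derivative_le p
  have := card_roots' p.derivative
  omega

theorem Splits.iterate_derivative {p : ℝ[X]} (hp : p.Splits) (k : ℕ) :
    (Polynomial.derivative^[k] p).Splits := by
  induction k with
  | zero => exact hp
  | succ k ih => rw [Function.iterate_succ_apply']; exact ih.derivative

theorem coeff_pos_of_splits {p : ℝ[X]} (hp : p.Splits) (hnonneg : ∀ j, 0 ≤ p.coeff j)
    (h0 : 0 < p.coeff 0) {j : ℕ} (hj : j ≤ p.natDegree) : 0 < p.coeff j := by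
  have hroots : ∀ r ∈ p.roots, r < 0 := fun r hr => not_le.1 fun hr0 =>
    (eval_pos_of_coeff_nonneg hnonneg h0 hr0).ne' (isRoot_of_mem_roots hr)
  have hlead : 0 < p.leadingCoeff :=
    (hnonneg _).lt_of_ne' (leadingCoeff_ne_zero.2 fun hp0 => by simp [hp0] at h0)
  have hprod : p = C p.leadingCoeff * ((p.roots.map Neg.neg).map fun a => X + C a).prod := by
    conv_lhs => rw [hp.eq_prod_roots]
    simp [Multiset.map_map, sub_eq_add_neg]
  have hcard : Multiset.card (p.roots.map Neg.neg) = p.natDegree := by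
    simpa using hp.natDegree_eq_card_roots.symm
  rw [hprod, coeff_C_mul, Multiset.prod_X_add_C_coeff _ (hcard ▸ hj)]
  exact mul_pos hlead (Multiset.esymm_pos
    (Multiset.forall_mem_map_iff.2 fun r hr => neg_pos.2 (hroots r hr)) (by omega))

end Polynomial

section ptrace

variable {ι : Type*} [Fintype ι]

theorem ptrace_eq_sum_det [DecidableEq ι] (p : ℕ) (S : Matrix ι ι ℝ) :
    ptrace p S =
      ∑ t ∈ Finset.univ.powersetCard p, (S.submatrix (Subtype.val : t → ι) Subtype.val).det := by
  unfold ptrace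
  congr!

theorem ptrace_zero (S : Matrix ι ι ℝ) : ptrace 0 S = 1 := by
  classical
  simp [ptrace_eq_sum_det]

theorem ptrace_one [DecidableEq ι] (p : ℕ) : ptrace p (1 : Matrix ι ι ℝ) = (Fintype.card ι).choose p := by
  simp [ptrace_eq_sum_det, submatrix_one _ Subtype.val_injective]

theorem ptrace_smul (p : ℕ) (c : ℝ) (S : Matrix ι ι ℝ) :
    ptrace p (c • S) = c ^ p * ptrace p S := by
  classical
  rw [ptrace_eq_sum_det, ptrace_eq_sum_det, Finset.mul_sum]
  refine Finset.sum_congr rfl fun t ht => ?_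
  refine (det_smul (S.submatrix (Subtype.val : t → ι) Subtype.val) c).trans ?_
  rw [Fintype.card_coe, (Finset.mem_powersetCard.1 ht).2]

theorem continuous_ptrace (p : ℕ) : Continuous (ptrace p : Matrix ι ι ℝ → ℝ) := by
  classical
  rw [_root_.funext (ptrace_eq_sum_det p)]
  fun_prop

theorem coeff_charpoly_neg [DecidableEq ι] (S : Matrix ι ι ℝ) {p : ℕ} (hp : p ≤ Fintype.card ι) :
    (-S).charpoly.coeff (Fintype.card ι - p) = ptrace p S := by
  rw [charpoly_coeff_eq_sum_minors _ _ hp, ptrace_eq_sum_det, Finset.mul_sum]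
  refine Finset.sum_congr rfl fun t ht => ?_
  rw [show (-S).submatrix (Subtype.val : t → ι) Subtype.val = -S.submatrix Subtype.val Subtype.val
    from rfl, det_neg, Fintype.card_coe, (Finset.mem_powersetCard.1 ht).2, ← mul_assoc, ← mul_pow,
    neg_one_mul, neg_neg, one_pow, one_mul]

theorem ptrace_add_smul_one [DecidableEq ι] (S : Matrix ι ι ℝ) (t : ℝ) {p : ℕ} (hp : p ≤ Fintype.card ι) :
    ptrace p (S + t • 1) = (taylor t (-S).charpoly).coeff (Fintype.card ι - p) := by
  rw [← coeff_charpoly_neg _ hp, taylor_apply, ← charpoly_sub_scalar, neg_add, sub_eq_add_neg,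
    smul_one_eq_diagonal, scalar_apply]

theorem splits_charpoly_of_isSymm [DecidableEq ι] {S : Matrix ι ι ℝ} (hS : S.IsSymm) : S.charpoly.Splits := by
  rw [(isHermitian_iff_isSymm.2 hS).charpoly_eq]
  exact Splits.prod fun i _ => Splits.X_sub_C _

theorem ptrace_pos_of_nonneg {S : Matrix ι ι ℝ} (hS : S.IsSymm) {m : ℕ} (hm : m ≤ Fintype.card ι)
    (hnonneg : ∀ p ≤ m, 0 ≤ ptrace p S) (hpos : 0 < ptrace m S) {p : ℕ} (hp : p ≤ m) :
    0 < ptrace p S := by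
  classical
  set k := Fintype.card ι - m
  set h := Polynomial.derivative^[k] (-S).charpoly
  have hcoeff : ∀ q ≤ m, h.coeff (m - q) = (Fintype.card ι - q).descFactorial k * ptrace q S := by
    intro q hq
    rw [coeff_iterate_derivative, show m - q + k = Fintype.card ι - q by omega,
      coeff_charpoly_neg S (hq.trans hm), nsmul_eq_mul]
  have hfactor : ∀ q ≤ m, (0 : ℝ) < (Fintype.card ι - q).descFactorial k := fun q hq => by
    exact_mod_cast Nat.descFactorial_pos.2 (by omega)
  have hdeg : h.natDegree ≤ m :=
    (natDegree_iterate_derivative _ _).trans (by rw [charpoly_natDegree_eq_dim]; omega)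
  have hcoeff_nonneg : ∀ j, 0 ≤ h.coeff j := by
    intro j
    rcases le_or_gt j m with hj | hj
    · rw [← Nat.sub_sub_self hj, hcoeff _ (Nat.sub_le _ _)]
      exact mul_nonneg (hfactor _ (Nat.sub_le _ _)).le (hnonneg _ (Nat.sub_le _ _))
    · rw [coeff_eq_zero_of_natDegree_lt (hdeg.trans_lt hj)]
  have hm_le : m ≤ h.natDegree := by
    refine le_natDegree_of_ne_zero ?_
    rw [← Nat.sub_zero m, hcoeff 0 (Nat.zero_le _), ptrace_zero, mul_one]
    exact (hfactor 0 (Nat.zero_le _)).ne'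
  have hcoeff_pos := coeff_pos_of_splits ((splits_charpoly_of_isSymm hS.neg).iterate_derivative k)
    hcoeff_nonneg (by simpa [← hcoeff m le_rfl] using mul_pos (hfactor m le_rfl) hpos)
    ((Nat.sub_le m p).trans hm_le)
  rw [hcoeff p hp] at hcoeff_pos
  exact pos_of_mul_pos_right hcoeff_pos (hfactor p hp).le

end ptrace

section gardingCone

variable {n m : ℕ}

theorem mem_gardingCone {S : Matrix (Fin n) (Fin n) ℝ} :
    S ∈ gardingCone n m ↔ S.IsSymm ∧ ∀ p ≤ m, 0 < ptrace p S := by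
  refine and_congr_right fun _ => ⟨fun h p hp => ?_, fun h p _ hp => h p hp⟩
  rcases p.eq_zero_or_pos with rfl | hp0
  · simp [ptrace_zero]
  · exact h p hp0 hp

theorem add_smul_one_mem_gardingCone (hmn : m ≤ n) {S : Matrix (Fin n) (Fin n) ℝ}
    (hS : S ∈ gardingCone n m) {t : ℝ} (ht : 0 ≤ t) : S + t • 1 ∈ gardingCone n m := by
  rw [mem_gardingCone] at hS ⊢
  refine ⟨hS.1.add (isSymm_one.smul t), fun p hp => ?_⟩
  have hcard : Fintype.card (Fin n) = n := Fintype.card_fin n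
  have hcoeff : ∀ q ≤ m, (-S).charpoly.coeff (Fintype.card (Fin n) - q) = ptrace q S :=
    fun q hq => coeff_charpoly_neg S (by omega)
  rw [ptrace_add_smul_one S t (by omega)]
  refine coeff_taylor_pos (fun j hj => ?_) (hcoeff p hp ▸ hS.2 p hp) ht
  rcases le_or_gt j (Fintype.card (Fin n)) with hjn | hjn
  · rw [← Nat.sub_sub_self hjn, hcoeff _ (by omega)]
    exact (hS.2 _ (by omega)).le
  · rw [coeff_eq_zero_of_natDegree_lt (by rwa [charpoly_natDegree_eq_dim])]

theorem smul_mem_gardingCone {S : Matrix (Fin n) (Fin n) ℝ} (hS : S ∈ gardingCone n m) {c : ℝ}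
    (hc : 0 < c) : c • S ∈ gardingCone n m := by
  refine ⟨hS.1.smul c, fun p hp hpm => ?_⟩
  rw [ptrace_smul]
  exact mul_pos (pow_pos hc p) (hS.2 p hp hpm)

theorem one_mem_gardingCone (hmn : m ≤ n) : (1 : Matrix (Fin n) (Fin n) ℝ) ∈ gardingCone n m := by
  refine ⟨isSymm_one, fun p _ hp => ?_⟩
  rw [ptrace_one, Fintype.card_fin]
  exact_mod_cast Nat.choose_pos (hp.trans hmn)

theorem starConvex_gardingCone (hmn : m ≤ n) : StarConvex ℝ 1 (gardingCone n m) := by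
  intro S hS a b ha hb hab
  rcases hb.eq_or_lt with rfl | hb
  · simpa [show a = 1 by linarith] using one_mem_gardingCone hmn
  · convert smul_mem_gardingCone (add_smul_one_mem_gardingCone hmn hS (div_nonneg ha hb.le)) hb
      using 1
    rw [smul_add, smul_smul, mul_div_cancel₀ _ hb.ne', add_comm]

theorem isPathConnected_gardingCone (hmn : m ≤ n) : IsPathConnected (gardingCone n m) :=
  (starConvex_gardingCone hmn).isPathConnected (one_mem_gardingCone hmn)

theorem setOf_isSymm_ptrace_pos_subset (hmn : m ≤ n) :
    {S : Matrix (Fin n) (Fin n) ℝ | S.IsSymm ∧ 0 < ptrace m S} ⊆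
      (⋂ p ∈ Set.Iic m, {S | 0 < ptrace p S}) ∪ ⋃ p ∈ Set.Iic m, {S | ptrace p S < 0} := by
  rintro S ⟨hS, hm⟩
  by_cases hneg : ∃ p ≤ m, ptrace p S < 0
  · obtain ⟨p, hp, hlt⟩ := hneg
    exact Or.inr (Set.mem_biUnion hp hlt)
  · push Not at hneg
    exact Or.inl (Set.mem_iInter₂.2 fun p hp =>
      ptrace_pos_of_nonneg hS (by rwa [Fintype.card_fin]) hneg hm hp)

theorem IsPreconnected.subset_gardingCone (hmn : m ≤ n) {C : Set (Matrix (Fin n) (Fin n) ℝ)}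
    (hC : IsPreconnected C) (hCA : C ⊆ {S | S.IsSymm ∧ 0 < ptrace m S})
    (hCK : (C ∩ gardingCone n m).Nonempty) : C ⊆ gardingCone n m := by
  set U := ⋂ p ∈ Set.Iic m, {S : Matrix (Fin n) (Fin n) ℝ | 0 < ptrace p S}
  set V := ⋃ p ∈ Set.Iic m, {S : Matrix (Fin n) (Fin n) ℝ | ptrace p S < 0}
  have hU : IsOpen U :=
    (Set.finite_Iic m).isOpen_biInter fun p _ => isOpen_lt continuous_const (continuous_ptrace p)
  have hV : IsOpen V := isOpen_biUnion fun p _ => isOpen_lt (continuous_ptrace p) continuous_const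
  have hUV : Disjoint U V := Set.disjoint_left.2 fun S hSU hSV => by
    obtain ⟨p, hp, hlt⟩ := Set.mem_iUnion₂.1 hSV
    rw [Set.mem_ofPred_eq] at hlt
    exact lt_asymm (Set.mem_iInter₂.1 hSU p hp) hlt
  obtain ⟨S0, hS0C, hS0K⟩ := hCK
  have hCU : C ⊆ U := hC.subset_left_of_subset_union hU hV hUV
    (hCA.trans (setOf_isSymm_ptrace_pos_subset hmn))
    ⟨S0, hS0C, Set.mem_iInter₂.2 (mem_gardingCone.1 hS0K).2⟩
  exact fun S hS => mem_gardingCone.2 ⟨(hCA hS).1, Set.mem_iInter₂.1 (hCU hS)⟩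

end gardingCone

theorem gardingCone_eq_connectedComponentIn_general (n m : ℕ) (h2 : m ≤ n)
    (S0 : Matrix (Fin n) (Fin n) ℝ) (hS0 : S0 ∈ gardingCone n m) :
    gardingCone n m
      = connectedComponentIn
          {S : Matrix (Fin n) (Fin n) ℝ | S.IsSymm ∧ 0 < ptrace m S} S0 := by
  set A := {S : Matrix (Fin n) (Fin n) ℝ | S.IsSymm ∧ 0 < ptrace m S}
  have hKA : gardingCone n m ⊆ A := fun S hS => ⟨hS.1, (mem_gardingCone.1 hS).2 m le_rfl⟩
  refine ((isPathConnected_gardingCone h2).isConnected.isPreconnected.subset_connectedComponentIn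
    hS0 hKA).antisymm ?_
  exact isPreconnected_connectedComponentIn.subset_gardingCone h2 (connectedComponentIn_subset A S0)
    ⟨S0, mem_connectedComponentIn (hKA hS0), hS0⟩

/-- For `1 ≤ m ≤ n` and an `m`-positive symmetric matrix `S⁰`, the Gårding cone
`K_m(n)` coincides with the connected component of `{S ∈ Sym(n) : T_m(S) > 0}`
containing `S⁰`. -/
theorem gardingCone_eq_connectedComponentIn (n m : ℕ) (h1 : 1 ≤ m) (h2 : m ≤ n)
    (S0 : Matrix (Fin n) (Fin n) ℝ) (hS0 : S0 ∈ gardingCone n m) :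
    gardingCone n m
      = connectedComponentIn
          {S : Matrix (Fin n) (Fin n) ℝ | S.IsSymm ∧ 0 < ptrace m S} S0 :=
  gardingCone_eq_connectedComponentIn_general n m h2 S0 hS0
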